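/- Let d ≥ 1 be an integer and δ ∈ (0,1/2). For s ≥ 0 define Q̄(s) = ∫₀^∞ ∫₀^∞ ∫_{ℝ^{d−1}} P(t, (s+β, y)) · min(t^{−c̲}, t^{−c̄}) dy dt dβ, where (s+β, y) denotes the point of ℝ^d whose first coordinate is s+β and whose remaining coordinates are y ∈ ℝ^{d−1}. Then sup_{s ≥ 0} Q̄(s) < ∞. -/

import Mathlib

/-!
For every `t > 0` the heat kernel `P(t, ·)` is a probability density on `ℝ^d`: it factors
into one-dimensional Gaussians, so its mass over the half-space `{x₁ ≥ s}` is at most `1` for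
every `s ≥ 0`. By Tonelli, `Q̄(s) ≤ ∫₀^∞ min(t^{-c̲}, t^{-c̄}) dt` uniformly in `s`, and this
integral is finite because `c̲ < 1 < c̄`.
-/

open Real MeasureTheory ENNReal

/-- The heat kernel on `ℝ × ℝ^d`, expressed as a function of the time variable `t`
and of the *squared* Euclidean norm `x2 = |x|²` of the spatial variable. -/
noncomputable def heatKsq (d : ℕ) (t x2 : ℝ) : ℝ :=
  if 0 < t then (4 * π * t) ^ (-(d : ℝ) / 2) * Real.exp (-x2 / (4 * t)) else 0

/-- `Q̄(s) = ∫₀^∞ ∫₀^∞ ∫_{ℝ^{d-1}} P(t,(s+β,y)) min(t^{-c̲},t^{-c̄}) dy dt dβ`,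
realised as a Lebesgue integral over `{(β,t,y) : β ≥ 0, t ≥ 0}`, where the point
`(s+β,y) ∈ ℝ^d` has squared norm `(s+β)² + |y|²`. -/
noncomputable def Qbar (d : ℕ) (δ : ℝ) (s : ℝ) : ℝ≥0∞ :=
  ∫⁻ q in {q : ℝ × ℝ × EuclideanSpace ℝ (Fin (d - 1)) | 0 ≤ q.1 ∧ 0 ≤ q.2.1},
    ENNReal.ofReal
      (heatKsq d q.2.1 ((s + q.1) ^ 2 + ‖q.2.2‖ ^ 2) *
        min (q.2.1 ^ (-(1 / 2 - δ))) (q.2.1 ^ (-(((d : ℝ) + 2) / 2 + δ))))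

open Set

section Gaussian

variable {b : ℝ}

lemma lintegral_ofReal_exp_neg_mul_sq (hb : 0 < b) :
    ∫⁻ x : ℝ, ENNReal.ofReal (rexp (-b * x ^ 2)) = ENNReal.ofReal √(π / b) := by
  rw [← ofReal_integral_eq_lintegral_ofReal (integrable_exp_neg_mul_sq hb)
    (.of_forall fun _ => (exp_pos _).le), integral_gaussian]

lemma lintegral_ofReal_exp_neg_mul_sq_norm {V : Type*} [NormedAddCommGroup V]
    [InnerProductSpace ℝ V] [FiniteDimensional ℝ V] [MeasurableSpace V] [BorelSpace V]
    (hb : 0 < b) :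
    ∫⁻ v : V, ENNReal.ofReal (rexp (-b * ‖v‖ ^ 2)) =
      ENNReal.ofReal ((π / b) ^ (Module.finrank ℝ V / 2 : ℝ)) := by
  have hint := GaussianFourier.integral_rexp_neg_mul_sq_norm (V := V) hb
  have hpos : (0 : ℝ) < (π / b) ^ (Module.finrank ℝ V / 2 : ℝ) := by positivity
  rw [← ofReal_integral_eq_lintegral_ofReal (.of_integral_ne_zero (hint ▸ hpos.ne'))
    (.of_forall fun _ => (exp_pos _).le), hint]

lemma setLIntegral_Ici_ofReal_exp_neg_mul_add_sq_le (hb : 0 < b) {s : ℝ} (hs : 0 ≤ s) :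
    ∫⁻ β in Ici 0, ENNReal.ofReal (rexp (-b * (s + β) ^ 2)) ≤ ENNReal.ofReal √(π / b) :=
  calc ∫⁻ β in Ici 0, ENNReal.ofReal (rexp (-b * (s + β) ^ 2))
      ≤ ∫⁻ β in Ici 0, ENNReal.ofReal (rexp (-b * β ^ 2)) := by
        refine setLIntegral_mono (by fun_prop) fun β (hβ : 0 ≤ β) => ?_
        have : β ^ 2 ≤ (s + β) ^ 2 := by nlinarith
        exact ENNReal.ofReal_le_ofReal (exp_le_exp.2 (by nlinarith))
    _ ≤ ∫⁻ β, ENNReal.ofReal (rexp (-b * β ^ 2)) := setLIntegral_le_lintegral _ _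
    _ = ENNReal.ofReal √(π / b) := lintegral_ofReal_exp_neg_mul_sq hb

end Gaussian

section HeatKernel

variable (d : ℕ)

@[fun_prop]
lemma Measurable.heatKsq {α : Type*} [MeasurableSpace α] {t x : α → ℝ}
    (ht : Measurable t) (hx : Measurable x) : Measurable fun a => heatKsq d (t a) (x a) :=
  Measurable.ite (measurableSet_lt measurable_const ht) (by fun_prop) measurable_const

lemma heatKsq_nonneg (t x2 : ℝ) : 0 ≤ heatKsq d t x2 := by
  unfold heatKsq
  split_ifs <;> positivity

lemma heatKsq_add {t : ℝ} (ht : 0 < t) (X Y : ℝ) :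
    heatKsq d t (X + Y) =
      (4 * π * t) ^ (-(d : ℝ) / 2) * rexp (-(4 * t)⁻¹ * X) * rexp (-(4 * t)⁻¹ * Y) := by
  rw [heatKsq, if_pos ht, mul_assoc _ (rexp _), ← exp_add]
  congr 2
  field_simp
  ring

end HeatKernel

lemma lintegral_heatKsq_halfspace_le_one {d : ℕ} (hd : 1 ≤ d) {s : ℝ} (hs : 0 ≤ s)
    (t : ℝ) :
    ∫⁻ y : EuclideanSpace ℝ (Fin (d - 1)), ∫⁻ β in Ici 0,
      ENNReal.ofReal (heatKsq d t ((s + β) ^ 2 + ‖y‖ ^ 2)) ≤ 1 := by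
  rcases le_or_gt t 0 with ht | ht
  · simp [heatKsq, not_lt.2 ht]
  set b := (4 * t)⁻¹
  have hb : 0 < b := by positivity
  set A := (4 * π * t) ^ (-(d : ℝ) / 2)
  have hA : 0 < A := by positivity
  have hmass : A * (π / b) ^ (((d - 1 : ℕ) : ℝ) / 2) * √(π / b) = 1 := by
    have hπb : π / b = 4 * π * t := by simp only [b, div_inv_eq_mul]; ring
    rw [hπb, sqrt_eq_rpow, ← Real.rpow_add (by positivity), ← Real.rpow_add (by positivity),
      Nat.cast_sub hd, Nat.cast_one]
    ring_nf
    exact Real.rpow_zero _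
  calc ∫⁻ y : EuclideanSpace ℝ (Fin (d - 1)), ∫⁻ β in Ici 0,
        ENNReal.ofReal (heatKsq d t ((s + β) ^ 2 + ‖y‖ ^ 2))
      = ∫⁻ y : EuclideanSpace ℝ (Fin (d - 1)), ∫⁻ β in Ici 0,
          ENNReal.ofReal A * ENNReal.ofReal (rexp (-b * ‖y‖ ^ 2)) *
            ENNReal.ofReal (rexp (-b * (s + β) ^ 2)) := by
        refine lintegral_congr fun y => lintegral_congr fun β => ?_
        rw [add_comm, heatKsq_add d ht, ← ofReal_mul hA.le, ← ofReal_mul (by positivity)]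
    _ = ENNReal.ofReal A * ENNReal.ofReal ((π / b) ^ (((d - 1 : ℕ) : ℝ) / 2)) *
          ∫⁻ β in Ici 0, ENNReal.ofReal (rexp (-b * (s + β) ^ 2)) := by
        rw [lintegral_lintegral_mul (by fun_prop) (by fun_prop),
          lintegral_const_mul' _ _ ofReal_ne_top, lintegral_ofReal_exp_neg_mul_sq_norm hb,
          finrank_euclideanSpace_fin]
    _ ≤ ENNReal.ofReal A * ENNReal.ofReal ((π / b) ^ (((d - 1 : ℕ) : ℝ) / 2)) *
          ENNReal.ofReal √(π / b) := by
        gcongr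
        exact setLIntegral_Ici_ofReal_exp_neg_mul_add_sq_le hb hs
    _ = 1 := by
        rw [← ofReal_mul hA.le, ← ofReal_mul (by positivity), hmass, ofReal_one]

lemma Qbar_le_setLIntegral {d : ℕ} (hd : 1 ≤ d) (δ : ℝ) {s : ℝ} (hs : 0 ≤ s) :
    Qbar d δ s ≤ ∫⁻ t in Ici 0,
      ENNReal.ofReal (min (t ^ (-(1 / 2 - δ))) (t ^ (-(((d : ℝ) + 2) / 2 + δ)))) := by
  set K : ℝ → ℝ := fun t => min (t ^ (-(1 / 2 - δ))) (t ^ (-(((d : ℝ) + 2) / 2 + δ)))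
  set μ := volume.restrict (Ici (0 : ℝ))
  set F : ℝ × ℝ × EuclideanSpace ℝ (Fin (d - 1)) → ℝ≥0∞ := fun q =>
    ENNReal.ofReal (heatKsq d q.2.1 ((s + q.1) ^ 2 + ‖q.2.2‖ ^ 2)) * ENNReal.ofReal (K q.2.1)
  have hF : Measurable F := by fun_prop
  have hQ : Qbar d δ s = ∫⁻ q, F q ∂μ.prod (μ.prod volume) := by
    have hset : {q : ℝ × ℝ × EuclideanSpace ℝ (Fin (d - 1)) | 0 ≤ q.1 ∧ 0 ≤ q.2.1} =
        Ici 0 ×ˢ (Ici 0 ×ˢ univ) := by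
      ext; simp
    rw [Qbar, hset, Measure.volume_eq_prod, ← Measure.prod_restrict, Measure.volume_eq_prod,
      ← Measure.prod_restrict, Measure.restrict_univ]
    exact lintegral_congr fun q => ofReal_mul (heatKsq_nonneg d _ _)
  calc Qbar d δ s
      = ∫⁻ p, ∫⁻ β, F (β, p) ∂μ ∂μ.prod volume := by
        rw [hQ, lintegral_prod_symm _ hF.aemeasurable]
    _ = ∫⁻ t, ∫⁻ y, ∫⁻ β, F (β, t, y) ∂μ ∂volume ∂μ :=
        lintegral_prod _ hF.lintegral_prod_left'.aemeasurable
    _ = ∫⁻ t, (∫⁻ y, ∫⁻ β, ENNReal.ofReal (heatKsq d t ((s + β) ^ 2 + ‖y‖ ^ 2)) ∂μ) *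
          ENNReal.ofReal (K t) ∂μ := by
        simp only [F, lintegral_mul_const' _ _ ofReal_ne_top]
    _ ≤ ∫⁻ t, ENNReal.ofReal (K t) ∂μ :=
        lintegral_mono fun t =>
          mul_le_of_le_one_left' (lintegral_heatKsq_halfspace_le_one hd hs t)

lemma setLIntegral_Ici_ofReal_min_rpow_neg_lt_top {a c : ℝ} (ha : a < 1) (hc : 1 < c) :
    ∫⁻ t in Ici 0, ENNReal.ofReal (min (t ^ (-a)) (t ^ (-c))) < ⊤ := by
  rw [← Icc_union_Ioi_eq_Ici zero_le_one]
  refine (lintegral_union_le _ _ _).trans_lt (ENNReal.add_lt_top.2 ⟨?_, ?_⟩)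
  · calc ∫⁻ t in Icc 0 1, ENNReal.ofReal (min (t ^ (-a)) (t ^ (-c)))
        ≤ ∫⁻ t in Ioo 0 1, ENNReal.ofReal (t ^ (-a)) := by
          rw [← setLIntegral_congr Ioo_ae_eq_Icc]
          exact setLIntegral_mono (by fun_prop) fun t _ => ofReal_le_ofReal (min_le_left _ _)
      _ < ⊤ :=
          ((intervalIntegral.integrableOn_Ioo_rpow_iff one_pos).2 (by linarith)).setLIntegral_lt_top
  · calc ∫⁻ t in Ioi 1, ENNReal.ofReal (min (t ^ (-a)) (t ^ (-c)))
        ≤ ∫⁻ t in Ioi 1, ENNReal.ofReal (t ^ (-c)) :=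
          setLIntegral_mono (by fun_prop) fun t _ => ofReal_le_ofReal (min_le_right _ _)
      _ < ⊤ := (integrableOn_Ioi_rpow_of_lt (by linarith) one_pos).setLIntegral_lt_top

theorem stmt14 (d : ℕ) (hd : 1 ≤ d) (δ : ℝ) (hδ : δ ∈ Set.Ioo (0 : ℝ) (1 / 2)) :
    (⨆ (s : ℝ) (_ : 0 ≤ s), Qbar d δ s) < ⊤ := by
  have hd' : (1 : ℝ) ≤ d := by exact_mod_cast hd
  refine lt_of_le_of_lt (iSup₂_le fun s hs => Qbar_le_setLIntegral hd δ hs) ?_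
  exact setLIntegral_Ici_ofReal_min_rpow_neg_lt_top (by linarith [hδ.1]) (by linarith [hδ.1])
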